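/- Let q : ℝ → ℝ³ be a smooth curve such that I := det(q, q', q'') is nowhere zero and J := det(q', q'', q''') satisfies J(t) + I(t)² = 0 for all t. Then the curve p(t) := I(t)⁻¹ (q'(t) × q''(t)) satisfies p(t) · q(t) = 1 and p'(t) = q(t) × q'(t) for all t. -/

import Mathlib

open Matrix
open scoped ContDiff

/-- Scalar triple product on ℝ³. -/
def det3 (u v w : Fin 3 → ℝ) : ℝ := u ⬝ᵥ (v ⨯₃ w)

/-
Write c = q' × q'' and I = det(q, q', q''), so p = I⁻¹ c, c' = q' × q''' and I' = det(q, q', q''')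
(the other terms of the product rule repeat a vector). Then c · q = I gives p · q = 1, and
p' = I⁻¹ c' - I' I⁻² c. Crossing Cramer's rule
I q''' = det(q''', q', q'') q + det(q, q''', q'') q' + I' q'' with q' gives
I c' = J (q' × q) + I' c, and J = -I² turns p' into q × q'.
-/

section Derivatives

variable {𝕜 ι : Type*} [NontriviallyNormedField 𝕜] [CompleteSpace 𝕜] [Fintype ι] {x : 𝕜}

theorem HasDerivAt.crossProduct {u v : 𝕜 → Fin 3 → 𝕜} {u' v' : Fin 3 → 𝕜}
    (hu : HasDerivAt u u' x) (hv : HasDerivAt v v' x) :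
    HasDerivAt (fun t => u t ⨯₃ v t) (u x ⨯₃ v' + u' ⨯₃ v x) x :=
  (_root_.crossProduct : (Fin 3 → 𝕜) →ₗ[𝕜] _ →ₗ[𝕜] _).toContinuousBilinearMap
    |>.hasDerivAt_of_bilinear (fun _ => hu) (fun _ => hv)

theorem HasDerivAt.dotProduct {u v : 𝕜 → ι → 𝕜} {u' v' : ι → 𝕜}
    (hu : HasDerivAt u u' x) (hv : HasDerivAt v v' x) :
    HasDerivAt (fun t => u t ⬝ᵥ v t) (u x ⬝ᵥ v' + u' ⬝ᵥ v x) x :=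
  (dotProductBilin 𝕜 𝕜 : (ι → 𝕜) →ₗ[𝕜] _ →ₗ[𝕜] 𝕜).toContinuousBilinearMap
    |>.hasDerivAt_of_bilinear (fun _ => hu) (fun _ => hv)

end Derivatives

theorem ContDiff.hasDerivAt_iterate_deriv {𝕜 F : Type*} [NontriviallyNormedField 𝕜]
    [NormedAddCommGroup F] [NormedSpace 𝕜 F] {f : 𝕜 → F} (hf : ContDiff 𝕜 ∞ f) (k : ℕ) (t : 𝕜) :
    HasDerivAt (deriv^[k] f) (deriv^[k + 1] f t) t := by
  rw [Function.iterate_succ_apply']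
  exact ((hf.iterate_deriv k).differentiable (by simp) t).hasDerivAt

section Frame

variable {u v w : ℝ → Fin 3 → ℝ} {x : Fin 3 → ℝ} {t : ℝ}

theorem hasDerivAt_cross_frame (hv : HasDerivAt v (w t) t) (hw : HasDerivAt w x t) :
    HasDerivAt (fun s => v s ⨯₃ w s) (v t ⨯₃ x) t := by
  simpa [cross_self] using hv.crossProduct hw

theorem hasDerivAt_det3_frame (hu : HasDerivAt u (v t) t) (hv : HasDerivAt v (w t) t)
    (hw : HasDerivAt w x t) :
    HasDerivAt (fun s => det3 (u s) (v s) (w s)) (det3 (u t) (v t) x) t := by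
  simpa [det3, dot_self_cross] using hu.dotProduct (hasDerivAt_cross_frame hv hw)

end Frame

theorem det3_smul_eq_add (u v w x : Fin 3 → ℝ) :
    det3 u v w • x = det3 x v w • u + det3 u x w • v + det3 u v x • w := by
  ext i
  fin_cases i <;> (simp [det3, cross_apply, dotProduct, Fin.sum_univ_three]; ring)

theorem det3_smul_cross_eq (u v w x : Fin 3 → ℝ) :
    det3 u v w • (v ⨯₃ x) = det3 v w x • (v ⨯₃ u) + det3 u v x • (v ⨯₃ w) := by
  have h := congrArg (v ⨯₃ ·) (det3_smul_eq_add u v w x)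
  simpa [cross_self, det3, triple_product_permutation x] using h

theorem inv_smul_cross_add_smul_cross_eq_cross (u v w x : Fin 3 → ℝ) (hI : det3 u v w ≠ 0)
    (hJ : det3 v w x + det3 u v w ^ 2 = 0) :
    (det3 u v w)⁻¹ • (v ⨯₃ x) + (-det3 u v x / det3 u v w ^ 2) • (v ⨯₃ w) = u ⨯₃ v := by
  rw [← inv_smul_smul₀ hI (v ⨯₃ x), det3_smul_cross_eq, eq_neg_of_add_eq_zero_left hJ,
    ← cross_anticomm u v]
  match_scalars <;> field_simp
  ring

/-- If a nondegenerate space curve `q` satisfies `J + I² = 0`, then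
`p := I⁻¹ (q' × q'')` solves the Cartan–Engel system `p ⬝ᵥ q = 1`, `p' = q × q'`. -/
theorem centroaffine_torsion_to_system (q : ℝ → Fin 3 → ℝ)
    (hq : ContDiff ℝ (⊤ : ℕ∞) q)
    (hI : ∀ t, det3 (q t) (deriv q t) (deriv (deriv q) t) ≠ 0)
    (hJ : ∀ t, det3 (deriv q t) (deriv (deriv q) t) (deriv (deriv (deriv q)) t)
        + (det3 (q t) (deriv q t) (deriv (deriv q) t)) ^ 2 = 0) :
    (∀ t, ((det3 (q t) (deriv q t) (deriv (deriv q) t))⁻¹ •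
        (deriv q t ⨯₃ deriv (deriv q) t)) ⬝ᵥ q t = 1) ∧
    ∀ t, deriv (fun s => (det3 (q s) (deriv q s) (deriv (deriv q) s))⁻¹ •
        (deriv q s ⨯₃ deriv (deriv q) s)) t
      = q t ⨯₃ deriv q t := by
  refine ⟨fun t => ?_, fun t => ?_⟩
  · rw [smul_dotProduct, dotProduct_comm, ← det3, smul_eq_mul, inv_mul_cancel₀ (hI t)]
  · have hq0 : HasDerivAt q (deriv q t) t := hq.hasDerivAt_iterate_deriv 0 t
    have hq1 : HasDerivAt (deriv q) (deriv (deriv q) t) t := hq.hasDerivAt_iterate_deriv 1 t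
    have hq2 : HasDerivAt (deriv (deriv q)) (deriv (deriv (deriv q)) t) t :=
      hq.hasDerivAt_iterate_deriv 2 t
    have hp := ((hasDerivAt_det3_frame hq0 hq1 hq2).fun_inv (hI t)).fun_smul
      (hasDerivAt_cross_frame hq1 hq2)
    rw [hp.deriv]
    exact inv_smul_cross_add_smul_cross_eq_cross _ _ _ _ (hI t) (hJ t)
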